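/- arXiv:1810.09667 — 2 statements merged into one kernel-verified Lean document; each statement's English description precedes it below -/
import Mathlib

section
/- Let A, B, Ã be n×n real symmetric matrices such that λ₁(A) = … = λ_d(A) = 0, λ_{d+1}(A) > 0, and B is positive semidefinite. Let X₀ be an n×d matrix with A X₀ = 0 and X₀ᵀ B X₀ nonsingular. Suppose the functional f(X) = λ_max((XᵀBX)^{-1}Xᵀ(A+Ã)X), defined on n×d matrices X with XᵀBX positive definite, attains its minimum at X. Then ‖sin∠(col(X), col(X₀))‖² ≤ (‖Ã‖/λ_{d+1}(A)) · (1 + ‖B‖ · λ_max((X₀ᵀBX₀)^{-1}X₀ᵀX₀)). -/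
/-!
Since `X₀` is feasible and `A` vanishes on its columns, `f(X) ≤ f(X₀) ≤ ‖Ã‖ μ` with
`μ = λ_max((X₀ᵀBX₀)⁻¹X₀ᵀX₀)`. For `u = Xv` the generalized Rayleigh bound for `f(X)` then gives
`uᵀAu = uᵀ(A + Ã)u - uᵀÃu ≤ ‖Ã‖ (1 + ‖B‖ μ) ‖u‖²`. On the other side, `col X₀` is all of `ker A`
(both have dimension `d`), so the spectral gap gives `λ_{d+1}(A) ‖u - P u‖² ≤ uᵀAu`, `P` being the
orthogonal projector onto `col X₀`. This bounds `(1 - P)` on `col X`, hence the norm of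
`(1 - P) P_{col X}`, the adjoint of `P_{col X} (1 - P)`.
-/

noncomputable section
open Matrix

/-- Spectral (operator 2-) norm of a real matrix. -/
noncomputable def specNorm {m n : ℕ} (M : Matrix (Fin m) (Fin n) ℝ) : ℝ :=
  ‖LinearMap.toContinuousLinearMap (Matrix.toEuclideanLin M)‖

/-- Eigenvalues of a Hermitian matrix, sorted in ascending order. -/
noncomputable def sortedEig {n : ℕ} {M : Matrix (Fin n) (Fin n) ℝ} (hM : M.IsHermitian) :
    Fin n → ℝ :=
  hM.eigenvalues ∘ Tuple.sort hM.eigenvalues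

/-- λ_max(S⁻¹ M): the largest (real) eigenvalue of S⁻¹M. -/
noncomputable def genLamMax {d : ℕ} (M S : Matrix (Fin d) (Fin d) ℝ) : ℝ :=
  sSup {r : ℝ | ∃ v : Fin d → ℝ, v ≠ 0 ∧ (S⁻¹ * M).mulVec v = r • v}

/-- Orthogonal projector onto a subspace, as a continuous linear map on the whole space. -/
noncomputable def projCLM {ι : Type*} [Fintype ι] (W : Submodule ℝ (EuclideanSpace ℝ ι)) :
    EuclideanSpace ℝ ι →L[ℝ] EuclideanSpace ℝ ι :=
  W.subtypeL.comp (W.orthogonalProjectionOnto)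

/-- ‖sin∠(V,W)‖ = ‖P_V (I − P_W)‖, the largest sine of canonical angles. -/
noncomputable def sinAngle {ι : Type*} [Fintype ι]
    (V W : Submodule ℝ (EuclideanSpace ℝ ι)) : ℝ :=
  ‖(projCLM V).comp (ContinuousLinearMap.id ℝ (EuclideanSpace ℝ ι) - projCLM W)‖

/-- Column space of a matrix, as a subspace of Euclidean space. -/
noncomputable def colSpaceE {ι κ : Type*} [Fintype ι] [Fintype κ] [DecidableEq κ]
    (M : Matrix ι κ ℝ) : Submodule ℝ (EuclideanSpace ℝ ι) :=
  LinearMap.range (Matrix.toEuclideanLin M)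

open scoped RealInnerProductSpace

lemma EuclideanSpace.norm_toLp_sq {ι : Type*} [Fintype ι] (x : ι → ℝ) :
    ‖(WithLp.toLp 2 x : EuclideanSpace ℝ ι)‖ ^ 2 = x ⬝ᵥ x := by
  rw [EuclideanSpace.norm_sq_eq]
  simp [dotProduct, sq]

namespace Matrix

section

variable {ι κ : Type*} [Fintype ι]

lemma IsHermitian.transpose_mul_mul {M : Matrix ι ι ℝ} (hM : M.IsHermitian) (Y : Matrix ι κ ℝ) :
    (Yᵀ * M * Y).IsHermitian := by
  simpa using isHermitian_conjTranspose_mul_mul Y hM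

lemma posSemidef_transpose_mul_self [Finite κ] (X : Matrix ι κ ℝ) : (Xᵀ * X).PosSemidef := by
  simpa using posSemidef_conjTranspose_mul_self X

lemma PosSemidef.transpose_mul_mul_same [Finite κ] {B : Matrix ι ι ℝ} (hB : B.PosSemidef)
    (X : Matrix ι κ ℝ) : (Xᵀ * B * X).PosSemidef := by
  simpa using hB.conjTranspose_mul_mul_same X

variable [Fintype κ]

lemma dotProduct_transpose_mul_mul_mulVec (M : Matrix ι ι ℝ) (X : Matrix ι κ ℝ) (v : κ → ℝ) :
    v ⬝ᵥ (Xᵀ * M * X) *ᵥ v = (X *ᵥ v) ⬝ᵥ M *ᵥ (X *ᵥ v) := by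
  rw [← mulVec_mulVec, ← mulVec_mulVec, dotProduct_mulVec v, vecMul_transpose]

lemma dotProduct_transpose_mul_self_mulVec (X : Matrix ι κ ℝ) (v : κ → ℝ) :
    v ⬝ᵥ (Xᵀ * X) *ᵥ v = (X *ᵥ v) ⬝ᵥ (X *ᵥ v) := by
  rw [← mulVec_mulVec, dotProduct_mulVec, vecMul_transpose]

variable [DecidableEq ι]

lemma inner_toLp_toEuclideanLin (M : Matrix ι ι ℝ) (x : ι → ℝ) :
    ⟪(WithLp.toLp 2 x : EuclideanSpace ℝ ι), toEuclideanLin M (WithLp.toLp 2 x)⟫ =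
      x ⬝ᵥ M *ᵥ x := by
  simp [EuclideanSpace.inner_eq_star_dotProduct, dotProduct_comm]

lemma inv_mul_mulVec_eq_smul_iff {M S : Matrix ι ι ℝ} (hS : IsUnit S.det) {v : ι → ℝ} {r : ℝ} :
    (S⁻¹ * M) *ᵥ v = r • v ↔ M *ᵥ v = r • (S *ᵥ v) := by
  rw [← mulVec_mulVec]
  constructor
  · intro h
    rw [← mulVec_smul, ← h, mulVec_mulVec, mul_nonsing_inv _ hS, one_mulVec]
  · intro h
    rw [h, mulVec_smul, mulVec_mulVec, nonsing_inv_mul _ hS, one_mulVec]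

lemma bddAbove_setOf_mulVec_eq_smul (N : Matrix ι ι ℝ) :
    BddAbove {r : ℝ | ∃ v : ι → ℝ, v ≠ 0 ∧ N *ᵥ v = r • v} := by
  refine (Module.End.finite_hasEigenvalue (toLin' N)).subset ?_ |>.bddAbove
  rintro r ⟨v, hv, hNv⟩
  exact Module.End.hasEigenvalue_of_hasEigenvector
    ⟨Module.End.mem_eigenspace_iff.2 (by simpa using hNv), hv⟩

open scoped MatrixOrder in
lemma PosDef.exists_posDef_mul_self_eq {S : Matrix ι ι ℝ} (hS : S.PosDef) :
    ∃ R : Matrix ι ι ℝ, R.PosDef ∧ R * R = S :=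
  ⟨CFC.sqrt S, hS.isStrictlyPositive.sqrt.posDef, CFC.sqrt_mul_sqrt_self S hS.posSemidef.nonneg⟩

end

namespace IsHermitian

variable {ι : Type*} [Fintype ι] [DecidableEq ι] {A : Matrix ι ι ℝ} (hA : A.IsHermitian)
include hA

lemma inner_eigenvectorBasis_toEuclideanLin (i : ι) (x : EuclideanSpace ℝ ι) :
    ⟪hA.eigenvectorBasis i, toEuclideanLin A x⟫ =
      hA.eigenvalues i * ⟪hA.eigenvectorBasis i, x⟫ := by
  have hb : toEuclideanLin A (hA.eigenvectorBasis i) =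
      hA.eigenvalues i • hA.eigenvectorBasis i := by
    simpa [toLpLin_apply] using congrArg (WithLp.toLp 2) (hA.mulVec_eigenvectorBasis i)
  rw [← isSymmetric_toEuclideanLin_iff.2 hA, hb, real_inner_smul_left]

lemma inner_toEuclideanLin_self (x : EuclideanSpace ℝ ι) :
    ⟪x, toEuclideanLin A x⟫ = ∑ i, hA.eigenvalues i * ⟪hA.eigenvectorBasis i, x⟫ ^ 2 := by
  rw [← hA.eigenvectorBasis.sum_inner_mul_inner]
  refine Finset.sum_congr rfl fun i _ ↦ ?_
  rw [hA.inner_eigenvectorBasis_toEuclideanLin, real_inner_comm]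
  ring

lemma mul_norm_sq_le_inner_toEuclideanLin_self {c : ℝ} {x : EuclideanSpace ℝ ι}
    (hx : ∀ i, hA.eigenvalues i < c → ⟪hA.eigenvectorBasis i, x⟫ = 0) :
    c * ‖x‖ ^ 2 ≤ ⟪x, toEuclideanLin A x⟫ := by
  rw [hA.inner_toEuclideanLin_self, ← hA.eigenvectorBasis.sum_sq_inner_right, Finset.mul_sum]
  refine Finset.sum_le_sum fun i _ ↦ ?_
  rcases lt_or_ge (hA.eigenvalues i) c with hi | hi
  · simp [hx i hi]
  · exact mul_le_mul_of_nonneg_right hi (sq_nonneg _)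

lemma dotProduct_mulVec_le_of_eigenvalues_le {c : ℝ} (hc : ∀ i, hA.eigenvalues i ≤ c)
    (x : ι → ℝ) : x ⬝ᵥ A *ᵥ x ≤ c * (x ⬝ᵥ x) := by
  rw [← inner_toLp_toEuclideanLin, ← EuclideanSpace.norm_toLp_sq, hA.inner_toEuclideanLin_self,
    ← hA.eigenvectorBasis.sum_sq_inner_right, Finset.mul_sum]
  exact Finset.sum_le_sum fun i _ ↦ mul_le_mul_of_nonneg_right (hc i) (sq_nonneg _)

lemma ker_toEuclideanLin_le_span :
    LinearMap.ker (toEuclideanLin A) ≤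
      Submodule.span ℝ (Set.range fun i : {i // hA.eigenvalues i = 0} ↦ hA.eigenvectorBasis i) := by
  intro x hx
  rw [← hA.eigenvectorBasis.sum_repr x]
  refine Submodule.sum_mem _ fun i _ ↦ ?_
  by_cases hi : hA.eigenvalues i = 0
  · exact Submodule.smul_mem _ _ (Submodule.subset_span ⟨⟨i, hi⟩, rfl⟩)
  · have h := hA.inner_eigenvectorBasis_toEuclideanLin i x
    rw [LinearMap.mem_ker.1 hx, inner_zero_right] at h
    simp [OrthonormalBasis.repr_apply_apply, (mul_eq_zero.1 h.symm).resolve_left hi]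

lemma finrank_span_eigenvectorBasis :
    Module.finrank ℝ
      (Submodule.span ℝ (Set.range fun i : {i // hA.eigenvalues i = 0} ↦ hA.eigenvectorBasis i)) =
      Fintype.card {i // hA.eigenvalues i = 0} :=
  finrank_span_eq_card
    (hA.eigenvectorBasis.orthonormal.comp _ Subtype.val_injective).linearIndependent

end IsHermitian

end Matrix

lemma specNorm_nonneg {m n : ℕ} (M : Matrix (Fin m) (Fin n) ℝ) : 0 ≤ specNorm M :=
  norm_nonneg _

lemma abs_dotProduct_mulVec_le_specNorm {n : ℕ} (M : Matrix (Fin n) (Fin n) ℝ) (x : Fin n → ℝ) :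
    |x ⬝ᵥ M *ᵥ x| ≤ specNorm M * (x ⬝ᵥ x) := by
  rw [← inner_toLp_toEuclideanLin, ← EuclideanSpace.norm_toLp_sq]
  set y : EuclideanSpace ℝ (Fin n) := WithLp.toLp 2 x
  calc |⟪y, toEuclideanLin M y⟫| ≤ ‖y‖ * ‖toEuclideanLin M y‖ := abs_real_inner_le_norm _ _
    _ ≤ ‖y‖ * (specNorm M * ‖y‖) :=
      mul_le_mul_of_nonneg_left ((toEuclideanLin M).toContinuousLinearMap.le_opNorm y)
        (norm_nonneg y)
    _ = specNorm M * ‖y‖ ^ 2 := by ring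

section ColumnSpace

variable {ι κ : Type*} [Fintype ι] [Fintype κ] [DecidableEq κ] {X : Matrix ι κ ℝ}

lemma colSpaceE_le_ker [DecidableEq ι] {A : Matrix ι ι ℝ} (h : A * X = 0) :
    colSpaceE X ≤ LinearMap.ker (toEuclideanLin A) := by
  rintro _ ⟨v, rfl⟩
  simp [toLpLin_apply, mulVec_mulVec, h]

lemma finrank_colSpaceE {B : Matrix ι ι ℝ} (h : IsUnit (Xᵀ * B * X).det) :
    Module.finrank ℝ (colSpaceE X) = Fintype.card κ := by
  rw [colSpaceE, LinearMap.finrank_range_of_inj, finrank_euclideanSpace]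
  intro u u' huu'
  have hX : X *ᵥ u.ofLp = X *ᵥ u'.ofLp := by simpa [toLpLin_apply] using huu'
  have hinj := mulVec_injective_iff_isUnit.2 ((isUnit_iff_isUnit_det _).2 h)
  refine WithLp.ofLp_injective 2 (hinj ?_)
  simp only [← mulVec_mulVec, hX]

end ColumnSpace

section Angle

variable {ι : Type*} [Fintype ι]

lemma projCLM_eq_starProjection (W : Submodule ℝ (EuclideanSpace ℝ ι)) :
    projCLM W = W.starProjection :=
  rfl

variable {V W : Submodule ℝ (EuclideanSpace ℝ ι)}

lemma sinAngle_le {c : ℝ} (hc : 0 ≤ c) (h : ∀ u ∈ V, ‖u - projCLM W u‖ ≤ c * ‖u‖) :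
    sinAngle V W ≤ c := by
  -- the adjoint of `P_V (1 - P_W)` is `(1 - P_W) P_V`, whose norm is read off on `V`
  rw [sinAngle, projCLM_eq_starProjection, projCLM_eq_starProjection,
    ← Submodule.starProjection_orthogonal, ← ContinuousLinearMap.adjoint.norm_map,
    ContinuousLinearMap.adjoint_comp, (isSelfAdjoint_starProjection _).adjoint_eq,
    (isSelfAdjoint_starProjection _).adjoint_eq]
  refine ContinuousLinearMap.opNorm_le_bound _ hc fun x ↦ ?_
  calc ‖Wᗮ.starProjection (V.starProjection x)‖ ≤ c * ‖V.starProjection x‖ := by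
        simpa [Submodule.starProjection_orthogonal, projCLM_eq_starProjection]
          using h _ (V.starProjection_apply_mem x)
    _ ≤ c * ‖x‖ := mul_le_mul_of_nonneg_left (V.norm_starProjection_apply_le x) hc

lemma sinAngle_sq_le {K : ℝ} (hK : 0 ≤ K) (h : ∀ u ∈ V, ‖u - projCLM W u‖ ^ 2 ≤ K * ‖u‖ ^ 2) :
    sinAngle V W ^ 2 ≤ K := by
  refine (Real.le_sqrt (norm_nonneg _) hK).1 (sinAngle_le (Real.sqrt_nonneg K) fun u hu ↦ ?_)
  rw [← Real.sqrt_sq (norm_nonneg (u - _)), ← Real.sqrt_sq (norm_nonneg u), ← Real.sqrt_mul hK]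
  exact Real.sqrt_le_sqrt (h u hu)

end Angle

section SpectralGap

variable {n d : ℕ} (hd : d < n) {A : Matrix (Fin n) (Fin n) ℝ} {hA : A.IsHermitian}
  (hzero : ∀ i : Fin n, (i : ℕ) < d → sortedEig hA i = 0) (hpos : 0 < sortedEig hA ⟨d, hd⟩)
include hzero hpos

lemma sortedEig_eq_zero_iff (j : Fin n) : sortedEig hA j = 0 ↔ (j : ℕ) < d := by
  refine ⟨fun hj ↦ ?_, hzero j⟩
  by_contra! hdj
  have := Tuple.monotone_sort hA.eigenvalues (show (⟨d, hd⟩ : Fin n) ≤ j from hdj)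
  simp only [sortedEig] at hj hpos
  linarith

lemma eigenvalues_eq_zero_or_le (i : Fin n) :
    hA.eigenvalues i = 0 ∨ sortedEig hA ⟨d, hd⟩ ≤ hA.eigenvalues i := by
  set σ := Tuple.sort hA.eigenvalues
  have hi : hA.eigenvalues i = sortedEig hA (σ⁻¹ i) := by simp [sortedEig, σ]
  rw [hi, sortedEig_eq_zero_iff hd hzero hpos]
  refine (lt_or_ge _ _).imp_right fun hdi ↦ ?_
  exact Tuple.monotone_sort hA.eigenvalues (show (⟨d, hd⟩ : Fin n) ≤ σ⁻¹ i from hdi)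

lemma card_eigenvalues_eq_zero : Fintype.card {i // hA.eigenvalues i = 0} = d := by
  set σ := Tuple.sort hA.eigenvalues
  have e : {j : Fin n // (j : ℕ) < d} ≃ {i // hA.eigenvalues i = 0} :=
    σ.subtypeEquiv fun j ↦ (sortedEig_eq_zero_iff hd hzero hpos j).symm
  rw [← Fintype.card_congr e, Fintype.card_fin_lt_of_le hd.le]

lemma mul_norm_sub_projCLM_sq_le {W : Submodule ℝ (EuclideanSpace ℝ (Fin n))}
    (hWA : W ≤ LinearMap.ker (toEuclideanLin A)) (hWd : Module.finrank ℝ W = d)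
    (u : EuclideanSpace ℝ (Fin n)) :
    sortedEig hA ⟨d, hd⟩ * ‖u - projCLM W u‖ ^ 2 ≤ ⟪u, toEuclideanLin A u⟫ := by
  have hW : W = Submodule.span ℝ
      (Set.range fun i : {i // hA.eigenvalues i = 0} ↦ hA.eigenvectorBasis i) :=
    Submodule.eq_of_le_of_finrank_eq (hWA.trans hA.ker_toEuclideanLin_le_span)
      (by rw [hWd, hA.finrank_span_eigenvectorBasis, card_eigenvalues_eq_zero hd hzero hpos])
  set w := projCLM W u
  have hw : toEuclideanLin A w = 0 := hWA (W.starProjection_apply_mem u)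
  have hp : u - w ∈ Wᗮ := W.sub_starProjection_mem_orthogonal u
  -- `w ∈ ker A` drops out of the quadratic form, leaving only the component orthogonal to `W`
  have hq : ⟪u, toEuclideanLin A u⟫ = ⟪u - w, toEuclideanLin A (u - w)⟫ := by
    rw [map_sub, hw, sub_zero, inner_sub_left, ← isSymmetric_toEuclideanLin_iff.2 hA w, hw,
      inner_zero_left, sub_zero]
  rw [hq]
  refine hA.mul_norm_sq_le_inner_toEuclideanLin_self fun i hi ↦ ?_
  have hi0 := (eigenvalues_eq_zero_or_le hd hzero hpos i).resolve_right hi.not_ge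
  exact Submodule.inner_right_of_mem_orthogonal (hW ▸ Submodule.subset_span ⟨⟨i, hi0⟩, rfl⟩) hp

end SpectralGap

section GenLamMax

variable {d : ℕ} {M S : Matrix (Fin d) (Fin d) ℝ}

lemma genLamMax_le {c : ℝ} (hS : S.PosDef) (hc : 0 ≤ c)
    (h : ∀ v, v ⬝ᵥ M *ᵥ v ≤ c * (v ⬝ᵥ S *ᵥ v)) : genLamMax M S ≤ c := by
  refine Real.sSup_le (fun r ⟨v, hv, hrv⟩ ↦ ?_) hc
  rw [inv_mul_mulVec_eq_smul_iff hS.det_pos.ne'.isUnit] at hrv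
  have hr := h v
  rw [hrv, dotProduct_smul, smul_eq_mul] at hr
  exact le_of_mul_le_mul_right hr (by simpa using hS.dotProduct_mulVec_pos hv)

lemma genLamMax_nonneg (hM : M.PosSemidef) (hS : S.PosDef) : 0 ≤ genLamMax M S := by
  refine Real.sSup_nonneg fun r ⟨v, hv, hrv⟩ ↦ ?_
  rw [inv_mul_mulVec_eq_smul_iff hS.det_pos.ne'.isUnit] at hrv
  have hr := hM.dotProduct_mulVec_nonneg v
  rw [hrv, star_trivial, dotProduct_smul, smul_eq_mul] at hr
  exact nonneg_of_mul_nonneg_left hr (by simpa using hS.dotProduct_mulVec_pos hv)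

lemma eigenvalues_le_genLamMax {R : Matrix (Fin d) (Fin d) ℝ} (hR : IsUnit R.det)
    (hH : (R⁻¹ * M * R⁻¹).IsHermitian) (j : Fin d) : hH.eigenvalues j ≤ genLamMax M (R * R) := by
  set w := (hH.eigenvectorBasis j).ofLp
  have hw : w ≠ 0 := by simpa [w] using hH.eigenvectorBasis.orthonormal.ne_zero j
  refine le_csSup (bddAbove_setOf_mulVec_eq_smul _) ⟨R⁻¹ *ᵥ w, fun h0 ↦ hw ?_, ?_⟩
  · rw [← one_mulVec w, ← mul_nonsing_inv _ hR, ← mulVec_mulVec, h0, mulVec_zero]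
  rw [inv_mul_mulVec_eq_smul_iff (by rw [det_mul]; exact hR.mul hR)]
  calc M *ᵥ (R⁻¹ *ᵥ w) = R *ᵥ ((R⁻¹ * M * R⁻¹) *ᵥ w) := by
        simp only [mulVec_mulVec, ← mul_assoc, mul_nonsing_inv _ hR, one_mul]
    _ = hH.eigenvalues j • (R *ᵥ w) := by rw [hH.mulVec_eigenvectorBasis, mulVec_smul]
    _ = hH.eigenvalues j • ((R * R) *ᵥ (R⁻¹ *ᵥ w)) := by
        rw [mulVec_mulVec, mul_nonsing_inv_cancel_right _ _ hR]

lemma dotProduct_mulVec_le_genLamMax_mul (hM : M.IsHermitian) (hS : S.PosDef) (v : Fin d → ℝ) :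
    v ⬝ᵥ M *ᵥ v ≤ genLamMax M S * (v ⬝ᵥ S *ᵥ v) := by
  rcases isEmpty_or_nonempty (Fin d) with hd | hd
  · simp [Subsingleton.elim v 0]
  -- with `S = R R`, the matrix `S⁻¹ M` is similar to the symmetric `H = R⁻¹ M R⁻¹`
  obtain ⟨R, hR, rfl⟩ := hS.exists_posDef_mul_self_eq
  have hRdet : IsUnit R.det := hR.det_pos.ne'.isUnit
  have hRt : Rᵀ = R := by simpa using hR.isHermitian.eq
  set H := R⁻¹ * M * R⁻¹
  have hH : H.IsHermitian := by
    have hRit : (R⁻¹)ᵀ = R⁻¹ := by rw [transpose_nonsing_inv, hRt]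
    simpa only [hRit] using hM.transpose_mul_mul R⁻¹
  obtain ⟨j, -, hj⟩ := Finset.univ.exists_max_image hH.eigenvalues Finset.univ_nonempty
  have hv : v ⬝ᵥ M *ᵥ v = (R *ᵥ v) ⬝ᵥ H *ᵥ (R *ᵥ v) := by
    rw [← dotProduct_transpose_mul_mul_mulVec, hRt, mul_assoc, mul_assoc,
      nonsing_inv_mul _ hRdet, mul_one, ← mul_assoc, mul_nonsing_inv _ hRdet, one_mul]
  have hSv : v ⬝ᵥ (R * R) *ᵥ v = (R *ᵥ v) ⬝ᵥ (R *ᵥ v) := by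
    rw [← dotProduct_transpose_mul_self_mulVec, hRt]
  calc v ⬝ᵥ M *ᵥ v = (R *ᵥ v) ⬝ᵥ H *ᵥ (R *ᵥ v) := hv
    _ ≤ hH.eigenvalues j * ((R *ᵥ v) ⬝ᵥ (R *ᵥ v)) :=
      hH.dotProduct_mulVec_le_of_eigenvalues_le (fun i ↦ hj i (Finset.mem_univ i)) _
    _ ≤ genLamMax M (R * R) * (v ⬝ᵥ (R * R) *ᵥ v) := by
      rw [hSv]
      exact mul_le_mul_of_nonneg_right (eigenvalues_le_genLamMax hRdet hH j)
        (dotProduct_self_star_nonneg _)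

end GenLamMax

section Perturbation

variable {n d : ℕ} {B : Matrix (Fin n) (Fin n) ℝ}

lemma dotProduct_mulVec_le_genLamMax_transpose_mul_mul {M : Matrix (Fin n) (Fin n) ℝ}
    (hM : M.IsHermitian) {Y : Matrix (Fin n) (Fin d) ℝ} (hY : (Yᵀ * B * Y).PosDef)
    (v : Fin d → ℝ) :
    (Y *ᵥ v) ⬝ᵥ M *ᵥ (Y *ᵥ v) ≤
      genLamMax (Yᵀ * M * Y) (Yᵀ * B * Y) * ((Y *ᵥ v) ⬝ᵥ B *ᵥ (Y *ᵥ v)) := by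
  simpa only [dotProduct_transpose_mul_mul_mulVec] using
    dotProduct_mulVec_le_genLamMax_mul (hM.transpose_mul_mul Y) hY v

lemma genLamMax_transpose_mul_add_mul_le {A At : Matrix (Fin n) (Fin n) ℝ}
    {X₀ : Matrix (Fin n) (Fin d) ℝ} (hAX₀ : A * X₀ = 0) (hS₀ : (X₀ᵀ * B * X₀).PosDef) :
    genLamMax (X₀ᵀ * (A + At) * X₀) (X₀ᵀ * B * X₀) ≤
      specNorm At * genLamMax (X₀ᵀ * X₀) (X₀ᵀ * B * X₀) := by
  have hX₀ := posSemidef_transpose_mul_self X₀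
  refine genLamMax_le hS₀ (mul_nonneg (specNorm_nonneg At) (genLamMax_nonneg hX₀ hS₀))
    fun v ↦ ?_
  calc v ⬝ᵥ (X₀ᵀ * (A + At) * X₀) *ᵥ v = (X₀ *ᵥ v) ⬝ᵥ At *ᵥ (X₀ *ᵥ v) := by
        rw [dotProduct_transpose_mul_mul_mulVec, add_mulVec, mulVec_mulVec, hAX₀, zero_mulVec,
          zero_add]
    _ ≤ specNorm At * (v ⬝ᵥ (X₀ᵀ * X₀) *ᵥ v) := by
      rw [dotProduct_transpose_mul_self_mulVec]
      exact (le_abs_self _).trans (abs_dotProduct_mulVec_le_specNorm At _)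
    _ ≤ specNorm At * (genLamMax (X₀ᵀ * X₀) (X₀ᵀ * B * X₀) * (v ⬝ᵥ (X₀ᵀ * B * X₀) *ᵥ v)) :=
      mul_le_mul_of_nonneg_left (dotProduct_mulVec_le_genLamMax_mul hX₀.isHermitian hS₀ v)
        (specNorm_nonneg At)
    _ = _ := by ring

lemma dotProduct_mulVec_le_of_genLamMax_add_le {A At : Matrix (Fin n) (Fin n) ℝ}
    (hA : A.IsHermitian) (hAt : At.IsHermitian) (hB : B.PosSemidef)
    {X : Matrix (Fin n) (Fin d) ℝ} (hXB : (Xᵀ * B * X).PosDef) {ρ : ℝ} (hρ : 0 ≤ ρ)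
    (hf : genLamMax (Xᵀ * (A + At) * X) (Xᵀ * B * X) ≤ ρ) (v : Fin d → ℝ) :
    (X *ᵥ v) ⬝ᵥ A *ᵥ (X *ᵥ v) ≤ (specNorm At + ρ * specNorm B) * ((X *ᵥ v) ⬝ᵥ (X *ᵥ v)) := by
  set x := X *ᵥ v
  have hBx : 0 ≤ x ⬝ᵥ B *ᵥ x := by simpa only [star_trivial] using hB.dotProduct_mulVec_nonneg x
  calc x ⬝ᵥ A *ᵥ x = x ⬝ᵥ (A + At) *ᵥ x + -(x ⬝ᵥ At *ᵥ x) := by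
        rw [add_mulVec, dotProduct_add]; ring
    _ ≤ ρ * (x ⬝ᵥ B *ᵥ x) + specNorm At * (x ⬝ᵥ x) := by
      refine add_le_add ?_ ((neg_le_abs _).trans (abs_dotProduct_mulVec_le_specNorm At x))
      exact (dotProduct_mulVec_le_genLamMax_transpose_mul_mul (hA.add hAt) hXB v).trans
        (mul_le_mul_of_nonneg_right hf hBx)
    _ ≤ ρ * (specNorm B * (x ⬝ᵥ x)) + specNorm At * (x ⬝ᵥ x) := by
      gcongr
      exact (le_abs_self _).trans (abs_dotProduct_mulVec_le_specNorm B x)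
    _ = (specNorm At + ρ * specNorm B) * (x ⬝ᵥ x) := by ring

end Perturbation

/-- Multivariate eigenvector perturbation bound: if A is symmetric with d smallest
eigenvalues 0 and λ_{d+1}(A) > 0, B ⪰ 0, A X₀ = 0 with X₀ᵀBX₀ nonsingular, and X
minimizes f(Y) = λ_max((YᵀBY)⁻¹Yᵀ(A+Ã)Y) over {Y : YᵀBY ≻ 0}, then
‖sin∠(col X, col X₀)‖² ≤ (‖Ã‖/λ_{d+1}(A))(1 + ‖B‖ λ_max((X₀ᵀBX₀)⁻¹X₀ᵀX₀)). -/
theorem invariant_subspace_perturbation {n d : ℕ} (hd : d < n)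
    (A B At : Matrix (Fin n) (Fin n) ℝ)
    (hA : A.IsHermitian) (hAt : At.IsHermitian) (hB : B.PosSemidef)
    (hzero : ∀ i : Fin n, (i : ℕ) < d → sortedEig hA i = 0)
    (hpos : 0 < sortedEig hA ⟨d, hd⟩)
    (X₀ : Matrix (Fin n) (Fin d) ℝ) (hAX₀ : A * X₀ = 0)
    (hX₀B : IsUnit (X₀ᵀ * B * X₀).det)
    (X : Matrix (Fin n) (Fin d) ℝ) (hXB : (Xᵀ * B * X).PosDef)
    (hmin : ∀ Y : Matrix (Fin n) (Fin d) ℝ, (Yᵀ * B * Y).PosDef →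
      genLamMax (Xᵀ * (A + At) * X) (Xᵀ * B * X) ≤
        genLamMax (Yᵀ * (A + At) * Y) (Yᵀ * B * Y)) :
    sinAngle (colSpaceE X) (colSpaceE X₀) ^ 2 ≤
      (specNorm At / sortedEig hA ⟨d, hd⟩) *
        (1 + specNorm B * genLamMax (X₀ᵀ * X₀) (X₀ᵀ * B * X₀)) := by
  set μ := genLamMax (X₀ᵀ * X₀) (X₀ᵀ * B * X₀)
  have hS₀ : (X₀ᵀ * B * X₀).PosDef :=
    (hB.transpose_mul_mul_same X₀).posDef_iff_det_ne_zero.2 hX₀B.ne_zero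
  have hμ : 0 ≤ μ := genLamMax_nonneg (posSemidef_transpose_mul_self X₀) hS₀
  have hf : genLamMax (Xᵀ * (A + At) * X) (Xᵀ * B * X) ≤ specNorm At * μ :=
    (hmin X₀ hS₀).trans (genLamMax_transpose_mul_add_mul_le hAX₀ hS₀)
  have hgap := mul_norm_sub_projCLM_sq_le hd hzero hpos (colSpaceE_le_ker hAX₀)
    ((finrank_colSpaceE hX₀B).trans (Fintype.card_fin d))
  refine sinAngle_sq_le (mul_nonneg (div_nonneg (specNorm_nonneg At) hpos.le)
    (add_nonneg zero_le_one (mul_nonneg (specNorm_nonneg B) hμ))) ?_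
  rintro _ ⟨v, rfl⟩
  rw [toLpLin_apply, EuclideanSpace.norm_toLp_sq (X *ᵥ v.ofLp), div_mul_eq_mul_div,
    div_mul_eq_mul_div, le_div_iff₀ hpos, mul_comm]
  calc _ ≤ (X *ᵥ v.ofLp) ⬝ᵥ A *ᵥ (X *ᵥ v.ofLp) := by
        simpa only [inner_toLp_toEuclideanLin] using hgap (WithLp.toLp 2 (X *ᵥ v.ofLp))
    _ ≤ (specNorm At + specNorm At * μ * specNorm B) * ((X *ᵥ v.ofLp) ⬝ᵥ (X *ᵥ v.ofLp)) :=
      dotProduct_mulVec_le_of_genLamMax_add_le hA hAt hB hXB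
        (mul_nonneg (specNorm_nonneg At) hμ) hf _
    _ = _ := by ring
end
end

section
/- Let X₀ be an n×d matrix and P^⊥ = I − P the orthogonal projector along the column space of (X₀;−I_d), written in block form with upper-left n×n block P₁. Then λ_min(P₁) = 1/(1+‖X₀‖²), where ‖X₀‖ is the spectral (largest singular value) norm of X₀. -/
/-!
Writing `A = (X₀; −I)`, we have `AᵀA = 1 + X₀ᵀX₀`, so the upper-left block of `I − A(AᵀA)⁻¹Aᵀ`
is `1 − X₀(1 + X₀ᵀX₀)⁻¹X₀ᵀ = (1 + X₀X₀ᵀ)⁻¹` by the Woodbury identity. Its spectrum is the image of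
the spectrum of the positive semidefinite matrix `X₀X₀ᵀ` under the decreasing map `x ↦ 1/(1 + x)`,
and the largest eigenvalue of `X₀X₀ᵀ` is `‖X₀X₀ᵀ‖ = ‖X₀‖²`: for a positive operator the norm is the
supremum of the Rayleigh quotient, which is an eigenvalue in finite dimension.
-/

noncomputable section
open Matrix

namespace ContinuousLinearMap

variable {E : Type*} [NormedAddCommGroup E] [InnerProductSpace ℝ E]

theorem IsPositive.nonneg_of_mem_spectrum [CompleteSpace E] {T : E →L[ℝ] E}
    (hT : T.IsPositive) {r : ℝ} (hr : r ∈ spectrum ℝ T) : 0 ≤ r :=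
  SpectrumRestricts.nnreal_iff.mp hT.spectrumRestricts r hr

theorem IsPositive.isGreatest_spectrum_norm [FiniteDimensional ℝ E] [Nontrivial E]
    {T : E →L[ℝ] E} (hT : T.IsPositive) : IsGreatest (spectrum ℝ T) ‖T‖ := by
  have := FiniteDimensional.complete ℝ E
  have le_norm : ∀ r ∈ spectrum ℝ T, r ≤ ‖T‖ := fun r hr =>
    (le_abs_self r).trans (spectrum.norm_le_norm_of_mem hr)
  set μ := ⨆ x : {x : E // x ≠ 0}, T.rayleighQuotient x
  have hμ : μ ∈ spectrum ℝ T := by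
    rw [spectrum_eq]
    exact hT.isSymmetric.hasEigenvalue_iSup_of_finiteDimensional.mem_spectrum
  have bdd : BddAbove (Set.range fun x : {x : E // x ≠ 0} => T.rayleighQuotient x) :=
    ⟨‖T‖, by rintro _ ⟨x, rfl⟩; exact (le_abs_self _).trans (T.rayleighQuotient_le_norm x)⟩
  suffices ‖T‖ ≤ μ from ⟨le_antisymm this (le_norm μ hμ) ▸ hμ, le_norm⟩
  rw [norm_eq_iSup_rayleighQuotient T hT.isSymmetric]
  refine ciSup_le fun x => ?_
  rw [abs_of_nonneg (div_nonneg (hT.2 x) (by positivity))]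
  rcases eq_or_ne x 0 with rfl | hx
  · simpa using hT.nonneg_of_mem_spectrum hμ
  · exact le_ciSup bdd ⟨x, hx⟩

end ContinuousLinearMap

namespace Matrix

variable {m n : Type*} [Fintype m] [Fintype n] [DecidableEq m]

theorem spectrum_eq_setOf_mulVec_eq_smul {K : Type*} [Field K] (M : Matrix m m K) :
    spectrum K M = {r | ∃ v, v ≠ 0 ∧ M *ᵥ v = r • v} := by
  ext r
  rw [← spectrum_toLin', ← Module.End.hasEigenvalue_iff_mem_spectrum]
  constructor
  · intro h
    obtain ⟨v, hv⟩ := h.exists_hasEigenvector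
    exact ⟨v, hv.2, hv.apply_eq_smul⟩
  · rintro ⟨v, hv0, hv⟩
    exact Module.End.hasEigenvalue_of_hasEigenvector ⟨Module.End.mem_eigenspace_iff.mpr hv, hv0⟩

theorem spectrum_inv_one_add {K : Type*} [Field K] {M : Matrix m m K} (h : IsUnit (1 + M)) :
    spectrum K (1 + M)⁻¹ = (fun x => (1 + x)⁻¹) '' spectrum K M := by
  obtain ⟨u, hu⟩ := h
  rw [← hu, ← coe_units_inv, ← spectrum.map_inv, hu, ← map_one (algebraMap K (Matrix m m K)),
    ← spectrum.singleton_add_eq, Set.singleton_add, ← Set.image_inv_eq_inv, Set.image_image]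

theorem submatrix_inl_one_sub_proj_fromRows_neg_one {R : Type*} [CommRing R] [DecidableEq n]
    (X : Matrix m n R) (h : IsUnit (1 + Xᵀ * X)) :
    ((1 : Matrix (m ⊕ n) (m ⊕ n) R) -
        Matrix.fromRows X (-1 : Matrix n n R) *
          ((Matrix.fromRows X (-1 : Matrix n n R))ᵀ * Matrix.fromRows X (-1 : Matrix n n R))⁻¹ *
          (Matrix.fromRows X (-1 : Matrix n n R))ᵀ).submatrix Sum.inl Sum.inl =
      (1 + X * Xᵀ)⁻¹ := by
  have woodbury := add_mul_mul_inv_eq_sub (1 : Matrix m m R) X 1 Xᵀ isUnit_one isUnit_one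
    (by simpa using h)
  simp only [inv_one, Matrix.mul_one, Matrix.one_mul] at woodbury
  rw [woodbury, transpose_fromRows, Matrix.fromCols_mul_fromRows, transpose_neg, transpose_one,
    Matrix.neg_mul, Matrix.one_mul, neg_neg, add_comm (Xᵀ * X)]
  ext i j
  simp [Matrix.mul_apply, Matrix.one_apply]

theorem isUnit_one_add_mul_transpose (X : Matrix m n ℝ) : IsUnit (1 + X * Xᵀ) := by
  rw [← conjTranspose_eq_transpose_of_trivial]
  exact (PosDef.one.add_posSemidef (posSemidef_self_mul_conjTranspose X)).isUnit

theorem isPositive_toEuclideanCLM_mul_transpose (X : Matrix m n ℝ) :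
    (toEuclideanCLM (𝕜 := ℝ) (X * Xᵀ)).IsPositive := by
  rw [← conjTranspose_eq_transpose_of_trivial]
  exact (LinearMap.isPositive_toContinuousLinearMap_iff _).mpr
    (isPositive_toEuclideanLin_iff.mpr (posSemidef_self_mul_conjTranspose X))

theorem nonneg_of_mem_spectrum_mul_transpose (X : Matrix m n ℝ) {r : ℝ}
    (hr : r ∈ spectrum ℝ (X * Xᵀ)) : 0 ≤ r := by
  rw [← AlgEquiv.spectrum_eq (toEuclideanCLM (n := m) (𝕜 := ℝ))] at hr
  exact (isPositive_toEuclideanCLM_mul_transpose X).nonneg_of_mem_spectrum hr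

open scoped Matrix.Norms.L2Operator

theorem isGreatest_spectrum_mul_transpose [Nonempty m] [DecidableEq n] (X : Matrix m n ℝ) :
    IsGreatest (spectrum ℝ (X * Xᵀ)) (‖X‖ ^ 2) := by
  have hnorm : ‖toEuclideanCLM (𝕜 := ℝ) (X * Xᵀ)‖ = ‖X‖ ^ 2 := by
    rw [← cstar_norm_def, ← conjTranspose_eq_transpose_of_trivial, sq,
      ← l2_opNorm_conjTranspose X, ← l2_opNorm_conjTranspose_mul_self, conjTranspose_conjTranspose]
  rw [← AlgEquiv.spectrum_eq (toEuclideanCLM (n := m) (𝕜 := ℝ)), ← hnorm]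
  exact (isPositive_toEuclideanCLM_mul_transpose X).isGreatest_spectrum_norm

theorem specNorm_eq_l2_opNorm {m n : ℕ} (X : Matrix (Fin m) (Fin n) ℝ) : specNorm X = ‖X‖ :=
  rfl

end Matrix

/-- The upper-left n×n block P₁ of I − P, where P is the orthogonal projector onto
col((X₀;−I)), has smallest eigenvalue 1/(1+‖X₀‖²). -/
theorem min_eigenvalue_upper_left_block {n d : ℕ} (hn : 0 < n)
    (X₀ : Matrix (Fin n) (Fin d) ℝ) :
    IsLeast
      {r : ℝ | ∃ v : Fin n → ℝ, v ≠ 0 ∧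
        (((1 : Matrix (Fin n ⊕ Fin d) (Fin n ⊕ Fin d) ℝ) -
            Matrix.fromRows X₀ (-1 : Matrix (Fin d) (Fin d) ℝ) *
              ((Matrix.fromRows X₀ (-1 : Matrix (Fin d) (Fin d) ℝ))ᵀ *
                Matrix.fromRows X₀ (-1 : Matrix (Fin d) (Fin d) ℝ))⁻¹ *
              (Matrix.fromRows X₀ (-1 : Matrix (Fin d) (Fin d) ℝ))ᵀ).submatrix
            Sum.inl Sum.inl).mulVec v = r • v}
      (1 / (1 + specNorm X₀ ^ 2)) := by
  have : Nonempty (Fin n) := ⟨⟨0, hn⟩⟩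
  have hgram : IsUnit (1 + X₀ᵀ * X₀) := by simpa using isUnit_one_add_mul_transpose X₀ᵀ
  rw [← spectrum_eq_setOf_mulVec_eq_smul, submatrix_inl_one_sub_proj_fromRows_neg_one X₀ hgram,
    spectrum_inv_one_add (isUnit_one_add_mul_transpose X₀), specNorm_eq_l2_opNorm, one_div]
  refine AntitoneOn.map_isGreatest (fun a ha b _ hab => ?_) (isGreatest_spectrum_mul_transpose X₀)
  have ha0 := nonneg_of_mem_spectrum_mul_transpose X₀ ha
  exact inv_anti₀ (by positivity) (by linarith)
end
end
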